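/- arXiv:math/0609044 — 2 statements merged into one kernel-verified Lean document; each statement's English description precedes it below -/
import Mathlib

section
/- The combinatorial harmonic measure Ω is a flow: for every vertex a of the tree with dynamics, Ω(a) = ∑_{a^C child of a} Ω(a^C). -/
open Filter

/-- A tree with dynamics `⟨T, F, deg⟩` of degree `d`, with dynamics shifting
levels up by `H`.  Vertices form the type `V`, each vertex has an integer
level, a parent (one level up), at least one and finitely many children.
Levels `≤ 0` consist of a single vertex (the root and extended root), each of
degree `d`.  The dynamics `F` map level `l` to level `l - H`, preserve the
child relation, and satisfy the local cover property. -/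
structure TreeWithDynamics (V : Type*) where
  level : V → ℤ
  parent : V → V
  F : V → V
  deg : V → ℕ
  H : ℕ
  d : ℕ
  H_pos : 0 < H
  d_ge : 2 ≤ d
  level_parent : ∀ a, level (parent a) = level a - 1
  sub_root : ∀ a b, level a ≤ 0 → level b ≤ 0 → level a = level b → a = b
  child_exists : ∀ a, ∃ b, parent b = a
  children_finite : ∀ a, {b | parent b = a}.Finite
  level_F : ∀ a, level (F a) = level a - H
  F_children : ∀ b, F (parent b) = parent (F b)
  deg_pos : ∀ a, 0 < deg a
  deg_mono : ∀ b, deg b ≤ deg (parent b)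
  deg_root : ∀ a, level a ≤ 0 → deg a = d
  preimage_finite : ∀ a, {b | F b = a}.Finite
  local_cover : ∀ a c, parent c = F a →
    (∑ᶠ b ∈ {b | parent b = a ∧ F b = c}, deg b) = deg a

variable {V : Type*}

/-- `Ω` is the combinatorial harmonic measure of the tree with dynamics `T`:
it equals `1` on the root and extended root, and satisfies
`Ω a = (deg a / d) * Ω (F a)` elsewhere. -/
def IsCombHarm (T : TreeWithDynamics V) (Ω : V → ℝ) : Prop :=
  (∀ a, T.level a ≤ 0 → Ω a = 1) ∧
  (∀ a, 0 < T.level a → Ω a = (T.deg a / T.d) * Ω (T.F a))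

/-- An end of the tree: a sequence of vertices starting at the root, each a
child of the previous one. -/
structure TreeEnd (T : TreeWithDynamics V) where
  seq : ℕ → V
  level_seq : ∀ l, T.level (seq l) = l
  parent_seq : ∀ l, T.parent (seq (l + 1)) = seq l

/-- The degree of an end: the (eventual) limit of the nonincreasing sequence
of degrees along the end, i.e. its infimum. -/
noncomputable def endDeg {T : TreeWithDynamics V} (x : TreeEnd T) : ℕ :=
  ⨅ l, T.deg (x.seq l)

/-- Ceiling of `l / H` for natural numbers (`H > 0`). -/
def ceilDiv (l H : ℕ) : ℕ := (l + H - 1) / H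

/-!
Every vertex `c` satisfies `Ω c = (deg c / d) · Ω (F c)`: off the (extended) root this is the
definition, and on it both sides equal `1` since `deg = d` there. Grouping the children of `a`
by their image under `F`, the local cover property turns `∑ Ω c` over the children of `a` into
`(deg a / d) · ∑ Ω c'` over the children of `F a`. So the flow identity at `F a` gives it at `a`.
Since `F` lowers levels by `H > 0`, this reduces everything to vertices of negative level, which
have exactly one child, lying like themselves in the extended root where `Ω = 1`.
-/

namespace TreeWithDynamics

variable (T : TreeWithDynamics V)

noncomputable def children (a : V) : Finset V := (T.children_finite a).toFinset

variable {T}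

@[simp]
theorem mem_children {a c : V} : c ∈ T.children a ↔ T.parent c = a :=
  (T.children_finite a).mem_toFinset

theorem finsum_children_eq_sum {M : Type*} [AddCommMonoid M] (f : V → M) (a : V) :
    ∑ᶠ c ∈ {c | T.parent c = a}, f c = ∑ c ∈ T.children a, f c :=
  finsum_mem_eq_finite_toFinset_sum f (T.children_finite a)

theorem level_eq_of_parent_eq {a c : V} (h : T.parent c = a) : T.level c = T.level a + 1 := by
  have := T.level_parent c
  rw [h] at this
  omega

theorem F_mem_children_F {a c : V} (h : c ∈ T.children a) : T.F c ∈ T.children (T.F a) := by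
  rw [mem_children, ← T.F_children, mem_children.1 h]

theorem sum_deg_children_filter_F [DecidableEq V] {a c' : V} (hc' : c' ∈ T.children (T.F a)) :
    ∑ c ∈ T.children a with T.F c = c', T.deg c = T.deg a := by
  rw [← T.local_cover a c' (mem_children.1 hc'), ← finsum_mem_coe_finset]
  congr 1
  ext c
  simp

theorem sum_children_deg_mul_comp_F {M : Type*} [CommSemiring M] (g : V → M) (a : V) :
    ∑ c ∈ T.children a, (T.deg c : M) * g (T.F c) = T.deg a * ∑ c' ∈ T.children (T.F a), g c' := by
  classical
  rw [← Finset.sum_fiberwise_of_maps_to (fun c hc => F_mem_children_F hc), Finset.mul_sum]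
  refine Finset.sum_congr rfl fun c' hc' => ?_
  calc ∑ c ∈ T.children a with T.F c = c', (T.deg c : M) * g (T.F c)
      = ∑ c ∈ T.children a with T.F c = c', (T.deg c : M) * g c' :=
        Finset.sum_congr rfl fun c hc => by rw [(Finset.mem_filter.1 hc).2]
    _ = T.deg a * g c' := by
        rw [← Finset.sum_mul, ← Nat.cast_sum, sum_deg_children_filter_F hc']

theorem children_eq_singleton_of_level_neg {a b : V} (ha : T.level a < 0) (hb : T.parent b = a) :
    T.children a = {b} := by
  refine Finset.eq_singleton_iff_unique_mem.2 ⟨mem_children.2 hb, fun c hc => ?_⟩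
  have hcb : T.level c = T.level b := by
    rw [level_eq_of_parent_eq (mem_children.1 hc), level_eq_of_parent_eq hb]
  exact T.sub_root c b (by rw [level_eq_of_parent_eq (mem_children.1 hc)]; omega)
    (by rw [level_eq_of_parent_eq hb]; omega) hcb

end TreeWithDynamics

namespace IsCombHarm

open TreeWithDynamics

variable {T : TreeWithDynamics V} {Ω : V → ℝ}

theorem eq_deg_div_mul_F (hΩ : IsCombHarm T Ω) (c : V) :
    Ω c = T.deg c / T.d * Ω (T.F c) := by
  rcases le_or_gt (T.level c) 0 with hc | hc
  · have hFc : T.level (T.F c) ≤ 0 := by rw [T.level_F]; omega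
    have hd : (T.d : ℝ) ≠ 0 := by have := T.d_ge; positivity
    rw [hΩ.1 c hc, hΩ.1 _ hFc, T.deg_root c hc, div_self hd, one_mul]
  · exact hΩ.2 c hc

theorem sum_children_of_level_neg (hΩ : IsCombHarm T Ω) {a : V} (ha : T.level a < 0) :
    Ω a = ∑ c ∈ T.children a, Ω c := by
  obtain ⟨b, hb⟩ := T.child_exists a
  have hbl : T.level b ≤ 0 := by rw [level_eq_of_parent_eq hb]; omega
  rw [children_eq_singleton_of_level_neg ha hb, Finset.sum_singleton, hΩ.1 a ha.le, hΩ.1 b hbl]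

theorem sum_children_of_sum_children_F (hΩ : IsCombHarm T Ω) {a : V}
    (hFa : Ω (T.F a) = ∑ c ∈ T.children (T.F a), Ω c) :
    Ω a = ∑ c ∈ T.children a, Ω c := by
  calc Ω a = T.deg a * ∑ c' ∈ T.children (T.F a), Ω c' / T.d := by
        rw [hΩ.eq_deg_div_mul_F, hFa, ← Finset.sum_div]; ring
    _ = ∑ c ∈ T.children a, T.deg c * (Ω (T.F c) / T.d) :=
        (sum_children_deg_mul_comp_F (fun c' => Ω c' / T.d) a).symm
    _ = ∑ c ∈ T.children a, Ω c :=
        Finset.sum_congr rfl fun c _ => by rw [hΩ.eq_deg_div_mul_F c]; ring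

theorem sum_children (hΩ : IsCombHarm T Ω) (a : V) : Ω a = ∑ c ∈ T.children a, Ω c := by
  suffices h : ∀ n : ℕ, ∀ a, T.level a < n → Ω a = ∑ c ∈ T.children a, Ω c from
    h (T.level a).toNat.succ a (by omega)
  intro n
  induction n with
  | zero => exact fun a ha => hΩ.sum_children_of_level_neg (by exact_mod_cast ha)
  | succ n ih =>
    intro a ha
    have hFa : T.level (T.F a) < n := by rw [T.level_F]; have := T.H_pos; push_cast at ha; omega
    exact hΩ.sum_children_of_sum_children_F (ih _ hFa)

end IsCombHarm

/-- The combinatorial harmonic measure is a flow: the measure of a vertex is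
the sum of the measures of its children. -/
theorem stmt2 (T : TreeWithDynamics V) (Ω : V → ℝ) (hΩ : IsCombHarm T Ω)
    (a : V) :
    Ω a = ∑ᶠ c ∈ {c | T.parent c = a}, Ω c := by
  rw [TreeWithDynamics.finsum_children_eq_sum]
  exact hΩ.sum_children a
end

section
/- Let D be the maximum of deg(x⃗) over all ends x⃗ of the tree with dynamics, and suppose only finitely many levels of the tree contain a vertex of degree greater than D. Then there exists a constant c₀ > 0 such that for all l ≥ 0 and all vertices a ∈ T_l, Ω(a) ≤ c₀ · (D/d)^⌈l/H⌉. -/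
/-! Unwinding the recursion, `Ω a` is a product of the factors `deg (Fⁿ a) / d` along the
orbit of `a` under `F`, one factor for each of the `⌈l/H⌉` steps down to the root. Every
factor is at most `1`, and above the last level `L` holding a vertex of degree `> D` every
factor is at most `D / d`; the at most `⌈L/H⌉` factors below `L` are absorbed into
`c₀ = (D / d)^(-⌈L/H⌉)`. Since `D` is the degree of an end, `0 < D ≤ d`. -/

open Filter

variable {V : Type*}

lemma ceilDiv_eq_ceilDiv_sub_add_one {l H : ℕ} (hl : 0 < l) (hH : 0 < H) :
    ceilDiv l H = ceilDiv (l - H) H + 1 := by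
  unfold ceilDiv
  rcases le_or_gt l H with h | h
  · rw [Nat.div_eq_of_lt (by omega : l - H + H - 1 < H),
      show l + H - 1 = l - 1 + H by omega, Nat.add_div_right _ hH,
      Nat.div_eq_of_lt (by omega : l - 1 < H)]
  · rw [show l + H - 1 = l - H + H - 1 + H by omega, Nat.add_div_right _ hH]

lemma pow_tsub_le_div {r : ℝ} (h0 : 0 < r) (h1 : r ≤ 1) (k m : ℕ) :
    r ^ (k - m) ≤ r ^ k / r ^ m := by
  rcases le_total m k with h | h
  · rw [pow_sub₀ r h0.ne' h, div_eq_mul_inv]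
  · rw [Nat.sub_eq_zero_of_le h, pow_zero, one_le_div (by positivity)]
    exact pow_le_pow_of_le_one h0.le h1 h

namespace TreeWithDynamics

variable (T : TreeWithDynamics V)

theorem cast_d_pos : (0 : ℝ) < T.d := by have := T.d_ge; positivity

theorem cast_div_d_le_one {n : ℕ} (hn : n ≤ T.d) : (n : ℝ) / T.d ≤ 1 := by
  rw [div_le_one T.cast_d_pos]; exact_mod_cast hn

@[elab_as_elim]
theorem level_induction {P : V → Prop} (f : V → V) (hf : ∀ a, T.level (f a) < T.level a)
    (base : ∀ a, T.level a ≤ 0 → P a) (step : ∀ a, 0 < T.level a → P (f a) → P a) (a : V) :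
    P a := by
  by_cases h : T.level a ≤ 0
  · exact base a h
  · exact step a (by omega) (level_induction f hf base step (f a))
termination_by (T.level a).toNat
decreasing_by have := hf a; omega

theorem deg_le_d (a : V) : T.deg a ≤ T.d :=
  T.level_induction T.parent (fun b => by simp [T.level_parent])
    (fun b hb => (T.deg_root b hb).le) (fun b _ ih => (T.deg_mono b).trans ih) a

theorem ceilDiv_level_F {a : V} (ha : 0 < T.level a) :
    ceilDiv (T.level a).toNat T.H = ceilDiv (T.level (T.F a)).toNat T.H + 1 := by
  rw [ceilDiv_eq_ceilDiv_sub_add_one (by omega) T.H_pos, T.level_F]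
  congr 2
  omega

theorem exists_forall_level_lt_deg_le {D : ℕ}
    (hfin : {l : ℤ | ∃ a, T.level a = l ∧ D < T.deg a}.Finite) :
    ∃ L : ℕ, ∀ a, (L : ℤ) < T.level a → T.deg a ≤ D := by
  obtain ⟨N, hN⟩ := hfin.bddAbove
  refine ⟨N.toNat, fun a ha => ?_⟩
  by_contra h
  have := hN ⟨a, rfl, not_le.1 h⟩
  omega

end TreeWithDynamics

namespace IsCombHarm

variable {T : TreeWithDynamics V} {Ω : V → ℝ}

theorem le_one (hΩ : IsCombHarm T Ω) (a : V) : Ω a ≤ 1 := by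
  refine T.level_induction T.F (fun b => by simp [T.level_F, T.H_pos])
    (fun b hb => (hΩ.1 b hb).le) (fun b hb ih => ?_) a
  rw [hΩ.2 b hb]
  calc (T.deg b / T.d : ℝ) * Ω (T.F b) ≤ T.deg b / T.d * 1 := by gcongr
    _ ≤ 1 := by rw [mul_one]; exact T.cast_div_d_le_one (T.deg_le_d b)

theorem le_pow_sub (hΩ : IsCombHarm T Ω) {D L : ℕ} (hDd : D ≤ T.d)
    (hL : ∀ a, (L : ℤ) < T.level a → T.deg a ≤ D) (a : V) :
    Ω a ≤ ((D : ℝ) / T.d) ^ (ceilDiv (T.level a).toNat T.H - ceilDiv L T.H) := by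
  refine T.level_induction T.F (fun b => by simp [T.level_F, T.H_pos])
    (fun b hb => by simp [hΩ.1 b hb, show (T.level b).toNat = 0 by omega,
      show ceilDiv 0 T.H = 0 from zero_ceilDiv T.H])
    (fun b hb ih => ?_) a
  rcases le_or_gt (T.level b) L with hbL | hbL
  · have : ceilDiv (T.level b).toNat T.H ≤ ceilDiv L T.H :=
      Nat.div_le_div_right (by omega)
    rw [Nat.sub_eq_zero_of_le this, pow_zero]
    exact hΩ.le_one b
  · rw [hΩ.2 b hb, T.ceilDiv_level_F hb]
    set e := ceilDiv (T.level (T.F b)).toNat T.H - ceilDiv L T.H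
    calc (T.deg b / T.d : ℝ) * Ω (T.F b) ≤ T.deg b / T.d * ((D : ℝ) / T.d) ^ e := by gcongr
      _ ≤ D / T.d * ((D : ℝ) / T.d) ^ e := by gcongr; exact hL b hbL
      _ ≤ _ := by
          rw [← pow_succ']
          exact pow_le_pow_of_le_one (by positivity) (T.cast_div_d_le_one hDd) (by omega)

end IsCombHarm

theorem stmt4_general (T : TreeWithDynamics V) (Ω : V → ℝ) (hΩ : IsCombHarm T Ω)
    (D : ℕ)
    (hmax : ∃ x : TreeEnd T, endDeg x = D)
    (hfin : {l : ℤ | ∃ a, T.level a = l ∧ D < T.deg a}.Finite) :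
    ∃ c₀ > (0 : ℝ), ∀ a : V, 0 ≤ T.level a →
      Ω a ≤ c₀ * ((D : ℝ) / T.d) ^ ceilDiv (T.level a).toNat T.H := by
  obtain ⟨x, rfl⟩ := hmax
  have hD : 1 ≤ endDeg x := le_ciInf fun l => T.deg_pos _
  have hDd : endDeg x ≤ T.d := (ciInf_le (OrderBot.bddBelow _) 0).trans (T.deg_le_d _)
  obtain ⟨L, hL⟩ := T.exists_forall_level_lt_deg_le hfin
  have hr0 : (0 : ℝ) < endDeg x / T.d := div_pos (Nat.cast_pos.mpr hD) T.cast_d_pos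
  refine ⟨((endDeg x / T.d : ℝ) ^ ceilDiv L T.H)⁻¹, by positivity, fun a _ => ?_⟩
  rw [← div_eq_inv_mul]
  exact (hΩ.le_pow_sub hDd hL a).trans (pow_tsub_le_div hr0 (T.cast_div_d_le_one hDd) _ _)

/-- If `D` is the maximum of the degrees of ends, and only finitely many
levels contain a vertex of degree greater than `D`, then there is a constant
`c₀ > 0` such that `Ω(a) ≤ c₀ · (D/d)^⌈l/H⌉` for every vertex `a` at level
`l ≥ 0`. -/
theorem stmt4 (T : TreeWithDynamics V) (Ω : V → ℝ) (hΩ : IsCombHarm T Ω)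
    (D : ℕ)
    (hub : ∀ x : TreeEnd T, endDeg x ≤ D)
    (hmax : ∃ x : TreeEnd T, endDeg x = D)
    (hfin : {l : ℤ | ∃ a, T.level a = l ∧ D < T.deg a}.Finite) :
    ∃ c₀ > (0 : ℝ), ∀ a : V, 0 ≤ T.level a →
      Ω a ≤ c₀ * ((D : ℝ) / T.d) ^ ceilDiv (T.level a).toNat T.H :=
  stmt4_general T Ω hΩ D hmax hfin
end
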